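/- arXiv:1203.4409 — 3 statements merged into one kernel-verified Lean document; each statement's English description precedes it below -/
import Mathlib

section
/- Let f : M → M be a continuous map on a compact metric space M. If Φ = {φ_n} is an almost additive sequence of continuous functions, then Φ is asymptotically additive; moreover, for any ξ > 0 there exists k = k(ξ) ≥ 1 such that limsup_{n→∞} (1/n) ‖ φ_n − S_n( (1/k) φ_k ) ‖ < ξ, where ‖·‖ is the sup norm on C(M). -/
open MeasureTheory Filter Topology

section Preamble

variable {M : Type*}

/-- Birkhoff sum `S_n φ = ∑_{j<n} φ ∘ f^j`. -/
noncomputable def birkhoff (f : M → M) (φ : M → ℝ) (n : ℕ) (x : M) : ℝ :=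
  ∑ j ∈ Finset.range n, φ (f^[j] x)

/-- Dynamical (Bowen) ball `B_n(x,ε)`. -/
def dynBall [PseudoMetricSpace M] (f : M → M) (n : ℕ) (x : M) (ε : ℝ) : Set M :=
  {y | ∀ i < n, dist (f^[i] x) (f^[i] y) < ε}

/-- A mistake function `g : ℕ × (0,ε₀] → ℕ`, extended by `g(n,ε) = g(n,ε₀)` for `ε > ε₀`. -/
def IsMistakeFunction (g : ℕ → ℝ → ℕ) (ε₀ : ℝ) : Prop :=
  0 < ε₀ ∧ (∀ ε : ℝ, 0 < ε → ∀ n : ℕ, g n ε ≤ g (n + 1) ε) ∧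
    (∀ ε : ℝ, 0 < ε → Tendsto (fun n : ℕ => (g n ε : ℝ) / n) atTop (𝓝 0)) ∧
    (∀ ε : ℝ, ε₀ < ε → ∀ n : ℕ, g n ε = g n ε₀)

/-- Mistake dynamical ball `B_n(g;x,ε) = ⋃_{Λ ∈ I(g;n,ε)} B_Λ(x,ε)`. -/
def mistakeBall [PseudoMetricSpace M] (f : M → M) (g : ℕ → ℝ → ℕ) (n : ℕ) (x : M) (ε : ℝ) :
    Set M :=
  ⋃ Λ ∈ {Λ : Finset ℕ | Λ ⊆ Finset.range n ∧ n - g n ε ≤ Λ.card},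
    {y | ∀ i ∈ Λ, dist (f^[i] x) (f^[i] y) < ε}

/-- Entropy `H_μ(⋁_{i<n} f^{-i} α)` of the `n`-th dynamical refinement of a finite
measurable partition, encoded by a map `α : M → Fin k`. -/
noncomputable def partitionEntropy [MeasurableSpace M] (μ : Measure M) (f : M → M) {k : ℕ}
    (α : M → Fin k) (n : ℕ) : ℝ :=
  ∑ w : Fin n → Fin k, Real.negMulLog (μ {x | ∀ i : Fin n, α (f^[(i : ℕ)] x) = w i}).toReal

/-- Kolmogorov–Sinai (measure-theoretic) entropy `h_μ(f)`. -/
noncomputable def measEntropy [MeasurableSpace M] (f : M → M) (μ : Measure M) : ℝ :=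
  ⨆ (k : ℕ) (α : {α : M → Fin k // Measurable α}),
    Filter.liminf (fun n : ℕ => partitionEntropy μ f α.1 n / n) atTop

/-- `(n,ε)`-separated subsets. -/
def IsDynSeparated [PseudoMetricSpace M] (f : M → M) (n : ℕ) (ε : ℝ) (E : Finset M) : Prop :=
  ∀ x ∈ E, ∀ y ∈ E, x ≠ y → ∃ i < n, ε ≤ dist (f^[i] x) (f^[i] y)

/-- Topological entropy via `(n,ε)`-separated sets. -/
noncomputable def topEntropy [PseudoMetricSpace M] (f : M → M) : EReal :=
  ⨆ (ε : ℝ) (_ : 0 < ε), Filter.limsup (fun n : ℕ =>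
    ((Real.log (sSup {k : ℕ | ∃ E : Finset M, IsDynSeparated f n ε E ∧ E.card = k} : ℕ) /
      n : ℝ) : EReal)) atTop

/-- Non-additive topological pressure `P(f,Φ)`. -/
noncomputable def nonAddPressure [PseudoMetricSpace M] (f : M → M) (Φ : ℕ → M → ℝ) : EReal :=
  ⨆ (ε : ℝ) (_ : 0 < ε), Filter.limsup (fun n : ℕ =>
    ((Real.log (sSup {r : ℝ | ∃ E : Finset M, IsDynSeparated f n ε E ∧
        r = ∑ y ∈ E, Real.exp (Φ n y)}) / n : ℝ) : EReal)) atTop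

/-- `F_*(μ,Φ) = lim_n (1/n) ∫ φ_n dμ` (as a `limsup`, which equals the limit whenever the
latter exists). -/
noncomputable def Fstar [MeasurableSpace M] (Φ : ℕ → M → ℝ) (μ : Measure M) : ℝ :=
  Filter.limsup (fun n : ℕ => (∫ x, Φ n x ∂μ) / n) atTop

/-- Sub-additive sequence of potentials. -/
def SubAdditiveSeq (f : M → M) (Φ : ℕ → M → ℝ) : Prop :=
  ∀ m, 1 ≤ m → ∀ n, 1 ≤ n → ∀ x, Φ (m + n) x ≤ Φ m x + Φ n (f^[m] x)

/-- Almost additive sequence of potentials, with constant `C`. -/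
def AlmostAdditiveSeq (f : M → M) (Φ : ℕ → M → ℝ) (C : ℝ) : Prop :=
  ∀ m, 1 ≤ m → ∀ n, 1 ≤ n → ∀ x,
    Φ m x + Φ n (f^[m] x) - C ≤ Φ (m + n) x ∧ Φ (m + n) x ≤ Φ m x + Φ n (f^[m] x) + C

/-- Asymptotically additive sequence of continuous potentials. -/
def AsympAdditive [MetricSpace M] (f : M → M) (Φ : ℕ → M → ℝ) : Prop :=
  (∀ n, Continuous (Φ n)) ∧ ∀ ξ : ℝ, 0 < ξ → ∃ φ : M → ℝ, Continuous φ ∧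
    Filter.limsup (fun n : ℕ => (⨆ x, |Φ n x - birkhoff f φ n x|) / n) atTop < ξ

/-- Weak Gibbs measure for `Φ` on `Λ`. -/
def WeakGibbs [MetricSpace M] [MeasurableSpace M] (f : M → M) (Φ : ℕ → M → ℝ)
    (ν : Measure M) (Λ : Set M) : Prop :=
  ν Λ = 1 ∧ ∃ ε₀ > (0 : ℝ), ∀ ε : ℝ, 0 < ε → ε < ε₀ → ∃ K : ℕ → ℝ, (∀ n, 0 < K n) ∧
    Tendsto (fun n : ℕ => Real.log (K n) / n) atTop (𝓝 0) ∧
    ∀ x ∈ Λ, ∀ n : ℕ, 1 ≤ n →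
      (K n)⁻¹ * Real.exp (-(n : ℝ) * (nonAddPressure f Φ).toReal + Φ n x) ≤
          (ν (dynBall f n x ε)).toReal ∧
        (ν (dynBall f n x ε)).toReal ≤
          K n * Real.exp (-(n : ℝ) * (nonAddPressure f Φ).toReal + Φ n x)

/-- Gibbs measure for `Φ` (uniform constant `K`). -/
def GibbsMeasure [MetricSpace M] [MeasurableSpace M] (f : M → M) (Φ : ℕ → M → ℝ)
    (ν : Measure M) : Prop :=
  ∃ ε₀ > (0 : ℝ), ∃ K : ℝ, 0 < K ∧ ∀ ε : ℝ, 0 < ε → ε < ε₀ → ∀ x : M, ∀ n : ℕ, 1 ≤ n →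
    K⁻¹ * Real.exp (-(n : ℝ) * (nonAddPressure f Φ).toReal + Φ n x) ≤
        (ν (dynBall f n x ε)).toReal ∧
      (ν (dynBall f n x ε)).toReal ≤
        K * Real.exp (-(n : ℝ) * (nonAddPressure f Φ).toReal + Φ n x)

/-- Equilibrium state: an invariant probability measure attaining the variational principle. -/
def IsEquilibriumState [MetricSpace M] [MeasurableSpace M] (f : M → M) (Φ : ℕ → M → ℝ)
    (μ : Measure M) : Prop :=
  IsProbabilityMeasure μ ∧ MeasurePreserving f μ μ ∧
    ((measEntropy f μ + Fstar Φ μ : ℝ) : EReal) = nonAddPressure f Φ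

/-- Specification property. -/
def SpecificationProperty [MetricSpace M] (f : M → M) : Prop :=
  ∀ ε : ℝ, 0 < ε → ∃ N : ℕ, 1 ≤ N ∧
    ∀ (k : ℕ) (xs : Fin k → M) (ns ps : Fin k → ℕ), (∀ i, N ≤ ps i) →
      ∃ x : M, ∀ i : Fin k, ∀ j ≤ ns i,
        dist (f^[j + ∑ l ∈ Finset.univ.filter (fun l => l < i), (ns l + ps l)] x)
          (f^[j] (xs i)) ≤ ε

/-- `g`-almost specification property. -/
def AlmostSpecification [MetricSpace M] (f : M → M) (g : ℕ → ℝ → ℕ) : Prop :=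
  ∃ ε > (0 : ℝ), ∃ N : ℕ, ∀ (k : ℕ) (xs : Fin k → M) (ns : Fin k → ℕ), (∀ i, N ≤ ns i) →
    (⋂ i : Fin k,
      f^[∑ l ∈ Finset.univ.filter (fun l => l < i), ns l] ⁻¹'
        mistakeBall f g (ns i) (xs i) ε).Nonempty

/-- `h_m(g;f,x) = lim_{ε→0} limsup_n −(1/n) log m(B_n(g;x,ε))`. -/
noncomputable def mistakeUpper [MetricSpace M] [MeasurableSpace M] (m : Measure M) (f : M → M)
    (g : ℕ → ℝ → ℕ) (x : M) : ℝ :=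
  Filter.limsup (fun ε : ℝ =>
    Filter.limsup (fun n : ℕ => -Real.log ((m (mistakeBall f g n x ε)).toReal) / n) atTop)
    (𝓝[>] 0)

/-- Weak Bowen condition for a sequence of potentials. -/
def WeakBowen [MetricSpace M] (f : M → M) (Ψ : ℕ → M → ℝ) : Prop :=
  ∃ δ > (0 : ℝ), ∃ a : ℕ → ℝ, (∀ n, 0 < a n) ∧
    Tendsto (fun n : ℕ => a n / n) atTop (𝓝 0) ∧
    ∀ n, 1 ≤ n → ∀ x y z : M, y ∈ dynBall f n x δ → z ∈ dynBall f n x δ →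
      |Ψ n y - Ψ n z| ≤ a n

end Preamble


/-!
Almost additivity gives `φ_{j+k} ≈ φ_j + φ_k ∘ f^j` up to `C` for every `j ≥ 1`, so summing over
`j ≤ n` writes the Birkhoff sum `S_n φ_k` as the telescoping sum `∑_{j ≤ n} (φ_{j+k} - φ_j)` up to
an error `n C`. That telescoping sum equals `∑_{1 ≤ i ≤ k} (φ_{n+i} - φ_i)`, which is `k φ_n` up to
`k (C + 2 sup|φ_i|)`. Hence `‖φ_n - S_n(φ_k / k)‖ ≤ n C / k + O(1)`, and `C / k < ξ` for `k` large.
-/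

open Finset

theorem sum_range_sub_shift_eq {G : Type*} [AddCommGroup G] (a : ℕ → G) (n k : ℕ) :
    ∑ j ∈ range n, (a (j + k) - a j) = ∑ i ∈ range k, (a (n + i) - a i) := by
  have h₁ := sum_range_add a n k
  have h₂ := sum_range_add a k n
  rw [add_comm k n, h₁] at h₂
  simp only [sum_sub_distrib, sub_eq_sub_iff_add_eq_add, add_comm _ k]
  rw [add_comm, ← h₂, add_comm]

theorem abs_sum_range_sub_sum_range_le {g h : ℕ → ℝ} {n : ℕ} {C : ℝ}
    (hgh : ∀ j < n, |g j - h j| ≤ C) :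
    |∑ j ∈ range n, g j - ∑ j ∈ range n, h j| ≤ n * C := by
  rw [← sum_sub_distrib]
  calc _ ≤ ∑ j ∈ range n, |g j - h j| := abs_sum_le_sum_abs _ _
    _ ≤ ∑ _j ∈ range n, C := sum_le_sum fun j hj => hgh j (mem_range.mp hj)
    _ = n * C := by simp

theorem limsup_le_of_eventually_le_add_div {u : ℕ → ℝ} (hu : ∀ n, 0 ≤ u n) {a b : ℝ}
    (h : ∀ᶠ n in atTop, u n ≤ a + b / n) : limsup u atTop ≤ a := by
  have hv : Tendsto (fun n : ℕ => a + b / n) atTop (𝓝 a) := by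
    simpa using tendsto_const_nhds.add (tendsto_const_div_atTop_nhds_zero_nat b)
  calc limsup u atTop ≤ limsup (fun n : ℕ => a + b / n) atTop :=
        limsup_le_limsup h (isCoboundedUnder_le_of_le atTop hu) hv.isBoundedUnder_le
    _ = a := hv.limsup_eq

theorem exists_forall_abs_le_of_continuous {M : Type*} [TopologicalSpace M] [CompactSpace M]
    {φ : ℕ → M → ℝ} (hφ : ∀ n, Continuous (φ n)) (k : ℕ) :
    ∃ D, 0 ≤ D ∧ ∀ i ≤ k, ∀ x, |φ i x| ≤ D := by
  let F : ℕ → C(M, ℝ) := fun i => ⟨φ i, hφ i⟩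
  refine ⟨∑ i ∈ range (k + 1), ‖F i‖, by positivity, fun i hi x => ?_⟩
  calc |φ i x| = ‖F i x‖ := (Real.norm_eq_abs _).symm
    _ ≤ ‖F i‖ := (F i).norm_coe_le_norm x
    _ ≤ ∑ j ∈ range (k + 1), ‖F j‖ :=
        single_le_sum (fun j _ => norm_nonneg (F j)) (mem_range.mpr (Nat.lt_succ_of_le hi))

theorem birkhoff_div_const {M : Type*} (f : M → M) (φ : M → ℝ) (c : ℝ) (n : ℕ) (x : M) :
    birkhoff f (fun y => φ y / c) n x = birkhoff f φ n x / c := by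
  simp only [birkhoff, sum_div]

namespace AlmostAdditiveSeq

variable {M : Type*} {f : M → M} {φ : ℕ → M → ℝ} {C D : ℝ} {k : ℕ}

theorem abs_natCast_mul_sub_birkhoff_le (hAA : AlmostAdditiveSeq f φ C) (hk : 1 ≤ k)
    (hD : ∀ i ≤ k, ∀ x, |φ i x| ≤ D) {n : ℕ} (hn : 1 ≤ n) (x : M) :
    |k * φ n x - birkhoff f (φ k) n x| ≤ n * C + k * (C + 2 * D) + 2 * D := by
  have hshift : birkhoff f (φ k) n x + φ k (f^[n] x) =
      ∑ j ∈ range n, φ k (f^[j + 1] x) + φ k x := by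
    rw [birkhoff, ← sum_range_succ, sum_range_succ', Function.iterate_zero, id]
  have hsplit : |∑ j ∈ range n, φ k (f^[j + 1] x) -
      ∑ j ∈ range n, (φ (j + k + 1) x - φ (j + 1) x)| ≤ n * C := by
    refine abs_sum_range_sub_sum_range_le fun j _ => abs_le.mpr ?_
    have h := hAA (j + 1) j.succ_pos k hk x
    rw [Nat.add_right_comm] at h
    constructor <;> linarith [h.1, h.2]
  have htel := sum_range_sub_shift_eq (fun i => φ (i + 1) x) n k
  have hend : |∑ i ∈ range k, (φ (n + i + 1) x - φ (i + 1) x) - ∑ _i ∈ range k, φ n x| ≤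
      k * (C + 2 * D) := by
    refine abs_sum_range_sub_sum_range_le fun i hi => abs_le.mpr ?_
    have h := hAA n hn (i + 1) i.succ_pos x
    rw [← add_assoc] at h
    have hfx := abs_le.mp (hD (i + 1) hi (f^[n] x))
    have hx := abs_le.mp (hD (i + 1) hi x)
    constructor <;> linarith [h.1, h.2]
  simp only [sum_const, card_range, nsmul_eq_mul] at hend
  have hkx := abs_le.mp (hD k le_rfl x)
  have hkfx := abs_le.mp (hD k le_rfl (f^[n] x))
  rw [htel] at hsplit
  rw [abs_le] at hsplit hend ⊢
  constructor <;> linarith [hsplit.1, hsplit.2, hend.1, hend.2]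

theorem limsup_iSup_abs_sub_birkhoff_le (hAA : AlmostAdditiveSeq f φ C) (hC : 0 ≤ C)
    (hk : 1 ≤ k) (hD0 : 0 ≤ D) (hD : ∀ i ≤ k, ∀ x, |φ i x| ≤ D) :
    limsup (fun n : ℕ => (⨆ x, |φ n x - birkhoff f (fun y => φ k y / k) n x|) / n) atTop ≤
      C / k := by
  have hk0 : (0 : ℝ) < k := by exact_mod_cast hk
  refine limsup_le_of_eventually_le_add_div
    (fun n => div_nonneg (Real.iSup_nonneg fun _ => abs_nonneg _) n.cast_nonneg)
    (b := C + 2 * D + 2 * D / k) ?_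
  filter_upwards [eventually_ge_atTop 1] with n hn
  have hn0 : (0 : ℝ) < n := by exact_mod_cast hn
  rw [div_le_iff₀ hn0]
  refine Real.iSup_le (fun x => ?_) (by positivity)
  have hkey := hAA.abs_natCast_mul_sub_birkhoff_le hk hD hn x
  have hdiv : φ n x - birkhoff f (fun y => φ k y / k) n x =
      (k * φ n x - birkhoff f (φ k) n x) / k := by
    rw [birkhoff_div_const]; field_simp
  rw [hdiv, abs_div, abs_of_pos hk0, div_le_iff₀ hk0]
  calc _ ≤ n * C + k * (C + 2 * D) + 2 * D := hkey
    _ = (C / k + (C + 2 * D + 2 * D / k) / n) * n * k := by field_simp; ring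

end AlmostAdditiveSeq

theorem almostAdditive_asympAdditive_general {M : Type*} [MetricSpace M] [CompactSpace M]
    (f : M → M) (φ : ℕ → M → ℝ) (hφ : ∀ n, Continuous (φ n))
    (C : ℝ) (hC : 0 < C) (hAA : AlmostAdditiveSeq f φ C) :
    AsympAdditive f φ ∧
      ∀ ξ : ℝ, 0 < ξ → ∃ k : ℕ, 1 ≤ k ∧
        Filter.limsup
          (fun n : ℕ => (⨆ x, |φ n x - birkhoff f (fun y => φ k y / k) n x|) / n) atTop < ξ := by
  have approx : ∀ ξ : ℝ, 0 < ξ → ∃ k : ℕ, 1 ≤ k ∧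
      limsup (fun n : ℕ => (⨆ x, |φ n x - birkhoff f (fun y => φ k y / k) n x|) / n) atTop
        < ξ := by
    intro ξ hξ
    obtain ⟨k, hCk⟩ := exists_nat_gt (C / ξ)
    have hk0 : (0 : ℝ) < k := (div_pos hC hξ).trans hCk
    have hk : 1 ≤ k := Nat.cast_pos.mp hk0
    obtain ⟨D, hD0, hD⟩ := exists_forall_abs_le_of_continuous hφ k
    refine ⟨k, hk, (hAA.limsup_iSup_abs_sub_birkhoff_le hC.le hk hD0 hD).trans_lt ?_⟩
    rwa [div_lt_iff₀ hk0, mul_comm, ← div_lt_iff₀ hξ]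
  refine ⟨⟨hφ, fun ξ hξ => ?_⟩, approx⟩
  obtain ⟨k, -, hk⟩ := approx ξ hξ
  exact ⟨fun y => φ k y / k, (hφ k).div_const _, hk⟩

/-- an almost additive sequence is asymptotically additive, and can be
approximated by Birkhoff sums of the potentials `(1/k) φ_k`. -/
theorem almostAdditive_asympAdditive {M : Type*} [MetricSpace M] [CompactSpace M]
    (f : M → M) (hf : Continuous f) (φ : ℕ → M → ℝ) (hφ : ∀ n, Continuous (φ n))
    (C : ℝ) (hC : 0 < C) (hAA : AlmostAdditiveSeq f φ C) :
    AsympAdditive f φ ∧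
      ∀ ξ : ℝ, 0 < ξ → ∃ k : ℕ, 1 ≤ k ∧
        Filter.limsup
          (fun n : ℕ => (⨆ x, |φ n x - birkhoff f (fun y => φ k y / k) n x|) / n) atTop < ξ :=
  almostAdditive_asympAdditive_general f φ hφ C hC hAA
end

section
/- Let f : M → M be a continuous map on a compact metric space M, let g be a mistake function, m ≥ 1 an integer and ε > 0. Suppose x, x' ∈ M satisfy d_Λ(x,x') > 4ε for every Λ ∈ I(2g;m,ε) (i.e. x and x' are (2g;m,4ε)-separated). Then for any y ∈ B_m(g;x,ε) and any y' ∈ B_m(g;x',ε) one has d_m(y,y') > 2ε; in particular B_m(y,ε) ∩ B_m(y',ε) = ∅. -/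
open MeasureTheory Filter Topology

/-! Two index sets missing at most `g(m,ε)` elements of `[0,m)` each share all but at most
`2g(m,ε)` indices, so the `(2g;m,4ε)`-separation of `x` and `x'` happens at an index `i` where
`y` is `ε`-close to `x` and `y'` is `ε`-close to `x'`; there the triangle inequality gives
`d(fⁱy, fⁱy') > 4ε - 2ε = 2ε`. -/

open Finset

theorem Finset.sub_add_le_card_inter {α : Type*} [DecidableEq α] {s t u : Finset α}
    (hs : s ⊆ u) (ht : t ⊆ u) {a b : ℕ} (ha : #u - a ≤ #s) (hb : #u - b ≤ #t) :
    #u - (a + b) ≤ #(s ∩ t) := by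
  have hunion : #(s ∪ t) ≤ #u := card_le_card (union_subset hs ht)
  have := card_union_add_card_inter s t
  omega

theorem sub_sub_lt_dist_of_dist_lt {X : Type*} [PseudoMetricSpace X] {a a' b b' : X}
    {R r r' : ℝ} (hR : R < dist a a') (hr : dist a b < r) (hr' : dist a' b' < r') :
    R - r - r' < dist b b' := by
  have := dist_triangle4 a b b' a'
  rw [dist_comm b' a'] at this
  linarith

section Dynamics

variable {M : Type*} [PseudoMetricSpace M] (f : M → M)

theorem mem_mistakeBall_iff {g : ℕ → ℝ → ℕ} {n : ℕ} {x y : M} {ε : ℝ} :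
    y ∈ mistakeBall f g n x ε ↔
      ∃ Λ ⊆ range n, n - g n ε ≤ #Λ ∧ ∀ i ∈ Λ, dist (f^[i] x) (f^[i] y) < ε := by
  simp [mistakeBall, and_assoc]

theorem dynBall_subset_preimage_ball {n i : ℕ} (hi : i < n) (y : M) (ε : ℝ) :
    dynBall f n y ε ⊆ f^[i] ⁻¹' Metric.ball (f^[i] y) ε :=
  fun _ hz => Metric.mem_ball'.2 (hz i hi)

theorem disjoint_dynBall_of_le_dist {n i : ℕ} (hi : i < n) {y y' : M} {ε : ℝ}
    (h : 2 * ε ≤ dist (f^[i] y) (f^[i] y')) :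
    Disjoint (dynBall f n y ε) (dynBall f n y' ε) :=
  ((Metric.ball_disjoint_ball (by linarith)).preimage f^[i]).mono
    (dynBall_subset_preimage_ball f hi y ε) (dynBall_subset_preimage_ball f hi y' ε)

end Dynamics

theorem mistakeBall_separation_general {M : Type*} [MetricSpace M]
    (f : M → M)
    (g : ℕ → ℝ → ℕ)
    (m : ℕ) (ε : ℝ) (x x' : M)
    (hsep : ∀ Λ : Finset ℕ, Λ ⊆ Finset.range m → m - 2 * g m ε ≤ Λ.card →
      ∃ i ∈ Λ, 4 * ε < dist (f^[i] x) (f^[i] x')) :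
    ∀ y ∈ mistakeBall f g m x ε, ∀ y' ∈ mistakeBall f g m x' ε,
      (∃ i < m, 2 * ε < dist (f^[i] y) (f^[i] y')) ∧
        dynBall f m y ε ∩ dynBall f m y' ε = ∅ := by
  intro y hy y' hy'
  obtain ⟨Λ, hΛ, hΛcard, hyΛ⟩ := (mem_mistakeBall_iff f).1 hy
  obtain ⟨Λ', hΛ', hΛ'card, hy'Λ'⟩ := (mem_mistakeBall_iff f).1 hy'
  have hcard : m - 2 * g m ε ≤ #(Λ ∩ Λ') := by
    rw [← card_range m] at hΛcard hΛ'card ⊢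
    simpa only [two_mul] using sub_add_le_card_inter hΛ hΛ' hΛcard hΛ'card
  obtain ⟨i, hi, hfar⟩ := hsep (Λ ∩ Λ') (inter_subset_left.trans hΛ) hcard
  obtain ⟨hiΛ, hiΛ'⟩ := mem_inter.1 hi
  have him : i < m := mem_range.1 (hΛ hiΛ)
  have hclose : 2 * ε < dist (f^[i] y) (f^[i] y') := by
    have := sub_sub_lt_dist_of_dist_lt hfar (hyΛ i hiΛ) (hy'Λ' i hiΛ')
    linarith
  exact ⟨⟨i, him, hclose⟩, (disjoint_dynBall_of_le_dist f him hclose.le).inter_eq⟩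

/-- if `x` and `x'` are `(2g;m,4ε)`-separated then points of the mistake balls
`B_m(g;x,ε)` and `B_m(g;x',ε)` are `(m,2ε)`-apart, and their `(m,ε)`-dynamical balls are
disjoint. -/
theorem mistakeBall_separation {M : Type*} [MetricSpace M]
    (f : M → M) (hf : Continuous f)
    (g : ℕ → ℝ → ℕ) (ε₀ : ℝ) (hg : IsMistakeFunction g ε₀)
    (m : ℕ) (hm : 1 ≤ m) (ε : ℝ) (hε : 0 < ε) (x x' : M)
    (hsep : ∀ Λ : Finset ℕ, Λ ⊆ Finset.range m → m - 2 * g m ε ≤ Λ.card →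
      ∃ i ∈ Λ, 4 * ε < dist (f^[i] x) (f^[i] x')) :
    ∀ y ∈ mistakeBall f g m x ε, ∀ y' ∈ mistakeBall f g m x' ε,
      (∃ i < m, 2 * ε < dist (f^[i] y) (f^[i] y')) ∧
        dynBall f m y ε ∩ dynBall f m y' ε = ∅ :=
  mistakeBall_separation_general f g m ε x x' hsep
end

section
/- Let f : M → M be a continuous map on a compact metric space M and let Ψ = {ψ_n} be a sub-additive sequence of continuous functions such that the sequence {ψ_n/n} is equicontinuous and inf_{n≥1} ψ_n(x)/n > −∞ for every x ∈ M. Then there is a subsequence of {ψ_n/n} converging uniformly to a continuous function g : M → ℝ, and for every f-invariant Borel probability measure μ one has F_*(μ,Ψ) = ∫ g dμ; in particular the map μ ↦ F_*(μ,Ψ) is continuous on M_f in the weak* topology. -/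
open MeasureTheory Filter Topology

/-!
Sub-additivity bounds `ψ_n/n` above by `sup ψ_1`, and equicontinuity upgrades the pointwise lower
bound to a uniform one on the compact space `M`. Arzelà–Ascoli then gives a subsequence
`ψ_{σ k}/σ k → g` uniformly. For an invariant measure `μ`, the integrals `∫ ψ_n dμ` form a
sub-additive sequence bounded below by a multiple of `n`, so by Fekete's lemma `(1/n) ∫ ψ_n dμ`
converges, and its limit `F_*(μ,Ψ)` is read off along `σ`, where uniform convergence gives
`∫ g dμ`. Weak* continuity follows since `g` is continuous.
-/

theorem exists_tendsto_div_of_subadditive_of_pos {u : ℕ → ℝ}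
    (hu : ∀ m n, 1 ≤ m → 1 ≤ n → u (m + n) ≤ u m + u n) {B : ℝ}
    (hB : ∀ n, 1 ≤ n → B ≤ u n / n) :
    ∃ L, Tendsto (fun n : ℕ => u n / n) atTop (𝓝 L) := by
  -- Fekete's lemma in Mathlib wants sub-additivity at `0` too, so we reset `u 0` to `0`.
  set v : ℕ → ℝ := fun n => if n = 0 then 0 else u n with hv
  have hsub : Subadditive v := by
    intro m n
    rcases Nat.eq_zero_or_pos m with rfl | hm
    · simp [hv]
    rcases Nat.eq_zero_or_pos n with rfl | hn
    · simp [hv]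
    simpa [hv, hm.ne', hn.ne'] using hu m n hm hn
  have hbdd : BddBelow (Set.range fun n => v n / n) := by
    refine ⟨min B 0, ?_⟩
    rintro _ ⟨n, rfl⟩
    rcases Nat.eq_zero_or_pos n with rfl | hn
    · simp [hv]
    · simpa [hv, hn.ne'] using min_le_of_left_le (hB n hn)
  refine ⟨hsub.lim, (hsub.tendsto_lim hbdd).congr' ?_⟩
  filter_upwards [eventually_ge_atTop 1] with n hn
  simp [hv, Nat.one_le_iff_ne_zero.mp hn]

theorem TendstoUniformly.tendsto_integral {α ι E : Type*} [MeasurableSpace α] {μ : Measure α}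
    [IsFiniteMeasure μ] [NormedAddCommGroup E] [NormedSpace ℝ E] {l : Filter ι}
    [l.IsCountablyGenerated] {F : ι → α → E} {g : α → E}
    (h : TendstoUniformly F g l) (hF : ∀ᶠ i in l, AEStronglyMeasurable (F i) μ)
    (hg : Integrable g μ) :
    Tendsto (fun i => ∫ x, F i x ∂μ) l (𝓝 (∫ x, g x ∂μ)) := by
  refine tendsto_integral_filter_of_dominated_convergence (fun x => ‖g x‖ + 1) hF ?_
    (hg.norm.add (integrable_const 1)) (ae_of_all _ h.tendsto_at)
  filter_upwards [Metric.tendstoUniformly_iff.mp h 1 one_pos] with i hi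
  refine ae_of_all _ fun x => ?_
  calc ‖F i x‖ ≤ ‖g x‖ + ‖F i x - g x‖ := norm_le_norm_add_norm_sub' _ _
    _ ≤ ‖g x‖ + 1 := by gcongr; rw [← dist_eq_norm, dist_comm]; exact (hi x).le

namespace Equicontinuous

variable {X : Type*} [TopologicalSpace X] [CompactSpace X]

theorem exists_forall_le_of_bddBelow {ι : Type*} {F : ι → X → ℝ} (hF : Equicontinuous F)
    (hbdd : ∀ x, ∃ b, ∀ i, b ≤ F i x) : ∃ B, ∀ i x, B ≤ F i x := by
  have hloc : ∀ x, ∃ b, ∀ᶠ y in 𝓝 x, ∀ i, b ≤ F i y := by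
    intro x
    obtain ⟨b, hb⟩ := hbdd x
    refine ⟨b - 1, (hF x _ (Metric.dist_mem_uniformity one_pos)).mono fun y hy i => ?_⟩
    have hxy : dist (F i x) (F i y) < 1 := hy i
    rw [Real.dist_eq] at hxy
    linarith [hb i, (abs_sub_lt_iff.mp hxy).1]
  choose b hb using hloc
  obtain ⟨t, -, hcover⟩ := isCompact_univ.elim_nhds_subcover _ fun x _ => hb x
  obtain ⟨B, hB⟩ := (t.image b).bddBelow
  refine ⟨B, fun i x => ?_⟩
  obtain ⟨z, hz, hxz⟩ := Set.mem_iUnion₂.mp (hcover (Set.mem_univ x))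
  exact (hB (Finset.mem_coe.mpr (Finset.mem_image_of_mem b hz))).trans (hxz i)

theorem exists_subseq_tendstoUniformly {β : Type*} [MetricSpace β] {F : ℕ → X → β}
    (hF : Equicontinuous F) {s : Set β} (hs : IsCompact s) (hFs : ∀ n x, F n x ∈ s) :
    ∃ g : X → β, Continuous g ∧
      ∃ φ : ℕ → ℕ, StrictMono φ ∧ TendstoUniformly (fun k => F (φ k)) g atTop := by
  let Fb : ℕ → BoundedContinuousFunction X β := fun n =>
    BoundedContinuousFunction.mkOfCompact ⟨F n, hF.continuous n⟩
  have hcpt : IsCompact (closure (Set.range Fb)) := by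
    refine BoundedContinuousFunction.arzela_ascoli s hs _ ?_ fun x U hU => ?_
    · rintro _ x ⟨n, rfl⟩
      exact hFs n x
    · filter_upwards [hF x U hU] with y hy
      rintro ⟨_, n, rfl⟩
      exact hy n
  obtain ⟨g, -, φ, hφ, hlim⟩ := hcpt.tendsto_subseq fun n => subset_closure (Set.mem_range_self n)
  exact ⟨g, g.continuous, φ, hφ, BoundedContinuousFunction.tendsto_iff_tendstoUniformly.mp hlim⟩

end Equicontinuous

namespace SubAdditiveSeq

variable {M : Type*} {f : M → M} {Ψ : ℕ → M → ℝ}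

theorem le_mul_of_forall_le (hΨ : SubAdditiveSeq f Ψ) {S : ℝ} (hS : ∀ x, Ψ 1 x ≤ S) {n : ℕ}
    (hn : 1 ≤ n) (x : M) : Ψ n x ≤ n * S := by
  induction n, hn using Nat.le_induction generalizing x with
  | base => simpa using hS x
  | succ n hn ih =>
    calc Ψ (n + 1) x ≤ Ψ n x + Ψ 1 (f^[n] x) := hΨ n hn 1 le_rfl x
      _ ≤ n * S + S := add_le_add (ih x) (hS _)
      _ = (n + 1 : ℕ) * S := by push_cast; ring

variable [MeasurableSpace M] {μ : Measure M}

theorem integral_add_le (hΨ : SubAdditiveSeq f Ψ) (hf : MeasurePreserving f μ μ)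
    (hint : ∀ n, Integrable (Ψ n) μ) {m n : ℕ} (hm : 1 ≤ m) (hn : 1 ≤ n) :
    ∫ x, Ψ (m + n) x ∂μ ≤ ∫ x, Ψ m x ∂μ + ∫ x, Ψ n x ∂μ := by
  have hfm := hf.iterate m
  have hint_comp : Integrable (fun x => Ψ n (f^[m] x)) μ :=
    hfm.integrable_comp_of_integrable (hint n)
  have hinv : ∫ x, Ψ n (f^[m] x) ∂μ = ∫ x, Ψ n x ∂μ := by
    rw [← integral_map hfm.measurable.aemeasurable
      (by rw [hfm.map_eq]; exact (hint n).aestronglyMeasurable), hfm.map_eq]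
  calc ∫ x, Ψ (m + n) x ∂μ ≤ ∫ x, (Ψ m x + Ψ n (f^[m] x)) ∂μ :=
        integral_mono (hint _) ((hint m).add hint_comp) (hΨ m hm n hn)
    _ = ∫ x, Ψ m x ∂μ + ∫ x, Ψ n x ∂μ := by rw [integral_add (hint m) hint_comp, hinv]

variable [IsProbabilityMeasure μ]

theorem exists_tendsto_integral_div (hΨ : SubAdditiveSeq f Ψ) (hf : MeasurePreserving f μ μ)
    (hint : ∀ n, Integrable (Ψ n) μ) {B : ℝ} (hB : ∀ n, 1 ≤ n → ∀ x, B ≤ Ψ n x / n) :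
    ∃ L, Tendsto (fun n : ℕ => (∫ x, Ψ n x ∂μ) / n) atTop (𝓝 L) := by
  refine exists_tendsto_div_of_subadditive_of_pos (B := B)
    (fun m n hm hn => hΨ.integral_add_le hf hint hm hn) fun n hn => ?_
  rw [← integral_div]
  calc B = ∫ _, B ∂μ := by simp
    _ ≤ ∫ x, Ψ n x / n ∂μ := integral_mono (integrable_const _) ((hint n).div_const _) (hB n hn)

theorem Fstar_eq_integral_of_tendstoUniformly (hΨ : SubAdditiveSeq f Ψ)
    (hf : MeasurePreserving f μ μ) (hint : ∀ n, Integrable (Ψ n) μ) {B : ℝ}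
    (hB : ∀ n, 1 ≤ n → ∀ x, B ≤ Ψ n x / n) {g : M → ℝ} (hg : Integrable g μ) {σ : ℕ → ℕ}
    (hσ : Tendsto σ atTop atTop)
    (hunif : TendstoUniformly (fun k x => Ψ (σ k) x / σ k) g atTop) :
    Fstar Ψ μ = ∫ x, g x ∂μ := by
  obtain ⟨L, hL⟩ := hΨ.exists_tendsto_integral_div hf hint hB
  have hsub : Tendsto (fun k => (∫ x, Ψ (σ k) x ∂μ) / σ k) atTop (𝓝 (∫ x, g x ∂μ)) := by
    simp_rw [← integral_div]
    exact hunif.tendsto_integral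
      (Eventually.of_forall fun k => ((hint _).div_const _).aestronglyMeasurable) hg
  rw [Fstar, hL.limsup_eq]
  exact tendsto_nhds_unique (hL.comp hσ) hsub

end SubAdditiveSeq

theorem subadditive_equicontinuous_Fstar_general {M : Type*} [MetricSpace M] [CompactSpace M]
    [MeasurableSpace M] [BorelSpace M]
    (f : M → M)
    (Ψ : ℕ → M → ℝ) (hΨcont : ∀ n, Continuous (Ψ n)) (hΨsub : SubAdditiveSeq f Ψ)
    (hΨequi : Equicontinuous (fun n : ℕ => fun x : M => Ψ n x / n))
    (hΨbdd : ∀ x : M, ∃ b : ℝ, ∀ n : ℕ, 1 ≤ n → b ≤ Ψ n x / n) :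
    ∃ g : M → ℝ, Continuous g ∧
      (∃ σ : ℕ → ℕ, StrictMono σ ∧ (∀ k, 1 ≤ σ k) ∧
        TendstoUniformly (fun k x => Ψ (σ k) x / (σ k : ℝ)) g atTop) ∧
      (∀ μ : Measure M, IsProbabilityMeasure μ → MeasurePreserving f μ μ →
        Fstar Ψ μ = ∫ x, g x ∂μ) ∧
      Continuous (fun μ : {μ : ProbabilityMeasure M //
          MeasurePreserving f (μ : Measure M) (μ : Measure M)} =>
        Fstar Ψ (μ.1 : Measure M)) := by
  have hequi : Equicontinuous fun k x => Ψ (k + 1) x / (k + 1 : ℕ) := hΨequi.comp (· + 1)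
  obtain ⟨S, hS⟩ := (isCompact_range (hΨcont 1)).bddAbove
  have hle : ∀ k x, Ψ (k + 1) x / (k + 1 : ℕ) ≤ S := fun k x =>
    (div_le_iff₀ (Nat.cast_pos.mpr k.succ_pos)).mpr <| by
      rw [mul_comm]; exact hΨsub.le_mul_of_forall_le (fun y => hS ⟨y, rfl⟩) k.succ_pos x
  obtain ⟨B, hB⟩ := hequi.exists_forall_le_of_bddBelow fun x =>
    (hΨbdd x).imp fun b hb k => hb (k + 1) k.succ_pos
  obtain ⟨g, hg, φ, hφ, hunif⟩ :=
    hequi.exists_subseq_tendstoUniformly isCompact_Icc fun k x => ⟨hB k x, hle k x⟩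
  have hFstar (μ : Measure M) (_ : IsProbabilityMeasure μ) (hμ : MeasurePreserving f μ μ) :
      Fstar Ψ μ = ∫ x, g x ∂μ :=
    hΨsub.Fstar_eq_integral_of_tendstoUniformly hμ
      (fun n => (hΨcont n).integrable_of_hasCompactSupport (.of_compactSpace _))
      (fun n hn x => by obtain ⟨k, rfl⟩ := Nat.exists_eq_add_of_le' hn; exact hB k x)
      (hg.integrable_of_hasCompactSupport (.of_compactSpace _))
      ((tendsto_add_atTop_nat 1).comp hφ.tendsto_atTop) hunif
  refine ⟨g, hg, ⟨fun k => φ k + 1, fun a b hab => Nat.add_lt_add_right (hφ hab) 1,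
    fun k => Nat.le_add_left 1 _, hunif⟩, hFstar, ?_⟩
  exact ((ProbabilityMeasure.continuous_integral_boundedContinuousFunction
    (BoundedContinuousFunction.mkOfCompact ⟨g, hg⟩)).comp continuous_subtype_val).congr
    fun μ => (hFstar μ.1 inferInstance μ.2).symm

/-- for a sub-additive sequence with equicontinuous, pointwise lower bounded
averages, some subsequence of `{ψ_n/n}` converges uniformly to a continuous `g`, the
functional `F_*(·,Ψ)` is given by `∫ g dμ` on invariant probability measures, and in
particular `μ ↦ F_*(μ,Ψ)` is weak* continuous on the invariant probability measures. -/
theorem subadditive_equicontinuous_Fstar {M : Type*} [MetricSpace M] [CompactSpace M]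
    [MeasurableSpace M] [BorelSpace M]
    (f : M → M) (hf : Continuous f)
    (Ψ : ℕ → M → ℝ) (hΨcont : ∀ n, Continuous (Ψ n)) (hΨsub : SubAdditiveSeq f Ψ)
    (hΨequi : Equicontinuous (fun n : ℕ => fun x : M => Ψ n x / n))
    (hΨbdd : ∀ x : M, ∃ b : ℝ, ∀ n : ℕ, 1 ≤ n → b ≤ Ψ n x / n) :
    ∃ g : M → ℝ, Continuous g ∧
      (∃ σ : ℕ → ℕ, StrictMono σ ∧ (∀ k, 1 ≤ σ k) ∧
        TendstoUniformly (fun k x => Ψ (σ k) x / (σ k : ℝ)) g atTop) ∧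
      (∀ μ : Measure M, IsProbabilityMeasure μ → MeasurePreserving f μ μ →
        Fstar Ψ μ = ∫ x, g x ∂μ) ∧
      Continuous (fun μ : {μ : ProbabilityMeasure M //
          MeasurePreserving f (μ : Measure M) (μ : Measure M)} =>
        Fstar Ψ (μ.1 : Measure M)) :=
  subadditive_equicontinuous_Fstar_general f Ψ hΨcont hΨsub hΨequi hΨbdd
end
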